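/- arXiv:2006.02984 — 3 statements merged into one kernel-verified Lean document; each statement's English description precedes it below -/
import Mathlib

section
/- Let V be continuous on compact metric spaces X × Y, let (μ,ν) be a saddle point of 𝒱(μ,ν)=∫∫V dμ dν, and let μ̄ ∈ P(X). Then μ̄ maximizes the V-variance over P(X) if and only if (μ̄, ν) is also a saddle point of 𝒱. -/
/-!
Testing the optimality of `ν` against `μ'` on Dirac masses shows that `ν` is a best response
to `μ'` exactly when `𝒱(μ', ν) = Var_V(μ')`; in general only `Var_V(μ') ≤ 𝒱(μ', ν)` holds.
For the saddle point this gives `𝒱(μ, ν) = Var_V(μ)`, and then a maximizer `μbar` of the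
variance is squeezed: `Var_V(μ) ≤ Var_V(μbar) ≤ 𝒱(μbar, ν) ≤ 𝒱(μ, ν) = Var_V(μ)`. Conversely,
if `(μbar, ν)` is a saddle point then `Var_V(μ') ≤ 𝒱(μ', ν) ≤ 𝒱(μbar, ν) = Var_V(μbar)`.
-/

open MeasureTheory

namespace SaddlePoint

variable {X Y : Type*}

noncomputable def payoff [MeasurableSpace X] [MeasurableSpace Y]
    (V : X × Y → ℝ) (μ : Measure X) (ν : Measure Y) : ℝ :=
  ∫ x, ∫ y, V (x, y) ∂ν ∂μ

noncomputable def vVariance [MeasurableSpace X] (V : X × Y → ℝ) (μ : Measure X) : ℝ :=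
  ⨅ y, ∫ x, V (x, y) ∂μ

variable [TopologicalSpace X] [MeasurableSpace X] [TopologicalSpace Y] {V : X × Y → ℝ}

lemma bddBelow_range_integral [CompactSpace X] [OpensMeasurableSpace X] [CompactSpace Y]
    (hV : Continuous V) (μ : Measure X) [IsProbabilityMeasure μ] :
    BddBelow (Set.range fun y => ∫ x, V (x, y) ∂μ) := by
  obtain ⟨m, hm⟩ := (isCompact_range hV).bddBelow
  refine ⟨m, ?_⟩
  rintro _ ⟨y, rfl⟩
  have hint : Integrable (fun x => V (x, y)) μ :=
    (hV.comp (.prodMk_left y)).integrable_of_hasCompactSupport (.of_compactSpace _)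
  calc m = ∫ _, m ∂μ := by simp
    _ ≤ ∫ x, V (x, y) ∂μ := integral_mono (integrable_const m) hint fun x => hm ⟨(x, y), rfl⟩

variable [MeasurableSpace Y]

lemma payoff_dirac [OpensMeasurableSpace Y] [SecondCountableTopology Y] (hV : Continuous V)
    (μ : Measure X) (y : Y) :
    payoff V μ (Measure.dirac y) = ∫ x, V (x, y) ∂μ :=
  integral_congr_ae <| .of_forall fun x =>
    integral_dirac' _ y (hV.comp (.prodMk_right x)).stronglyMeasurable

variable [CompactSpace X] [OpensMeasurableSpace X] [CompactSpace Y] [OpensMeasurableSpace Y]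

lemma vVariance_le_payoff [SecondCountableTopologyEither X Y] (hV : Continuous V)
    (μ : Measure X) (ν : Measure Y) [IsProbabilityMeasure μ] [IsProbabilityMeasure ν] :
    vVariance V μ ≤ payoff V μ ν := by
  have hint : Integrable V (μ.prod ν) :=
    hV.integrable_of_hasCompactSupport (.of_compactSpace V)
  calc vVariance V μ = ∫ _, vVariance V μ ∂ν := by simp
    _ ≤ ∫ y, ∫ x, V (x, y) ∂μ ∂ν :=
      integral_mono (integrable_const _) hint.integral_prod_right fun y =>
        ciInf_le (bddBelow_range_integral hV μ) y
    _ = payoff V μ ν := (integral_integral_swap (f := fun x y => V (x, y)) hint).symm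

lemma forall_payoff_le_iff_payoff_eq_vVariance [SecondCountableTopology Y] [Nonempty Y]
    (hV : Continuous V) (μ : Measure X) (ν : Measure Y)
    [IsProbabilityMeasure μ] [IsProbabilityMeasure ν] :
    (∀ ν' : Measure Y, IsProbabilityMeasure ν' → payoff V μ ν ≤ payoff V μ ν') ↔
      payoff V μ ν = vVariance V μ := by
  refine ⟨fun h => le_antisymm ?_ (vVariance_le_payoff hV μ ν), fun h ν' _ => ?_⟩
  · refine le_ciInf fun y => ?_
    simpa only [payoff_dirac hV] using h (Measure.dirac y) inferInstance
  · exact h ▸ vVariance_le_payoff hV μ ν'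

end SaddlePoint

open SaddlePoint

theorem maximizer_iff_saddle_general {X Y : Type*}
    [MetricSpace X] [CompactSpace X] [MeasurableSpace X] [BorelSpace X]
    [MetricSpace Y] [CompactSpace Y] [MeasurableSpace Y] [BorelSpace Y] [Nonempty Y]
    (V : X × Y → ℝ) (hV : Continuous V)
    (μ : Measure X) (ν : Measure Y) [IsProbabilityMeasure μ] [IsProbabilityMeasure ν]
    (hsaddle₁ : ∀ μ' : Measure X, IsProbabilityMeasure μ' →
      (∫ x, ∫ y, V (x, y) ∂ν ∂μ') ≤ ∫ x, ∫ y, V (x, y) ∂ν ∂μ)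
    (hsaddle₂ : ∀ ν' : Measure Y, IsProbabilityMeasure ν' →
      (∫ x, ∫ y, V (x, y) ∂ν ∂μ) ≤ ∫ x, ∫ y, V (x, y) ∂ν' ∂μ)
    (μbar : Measure X) [IsProbabilityMeasure μbar] :
    (∀ μ' : Measure X, IsProbabilityMeasure μ' →
      (⨅ y : Y, ∫ x, V (x, y) ∂μ') ≤ ⨅ y : Y, ∫ x, V (x, y) ∂μbar) ↔
    ((∀ μ' : Measure X, IsProbabilityMeasure μ' →
      (∫ x, ∫ y, V (x, y) ∂ν ∂μ') ≤ ∫ x, ∫ y, V (x, y) ∂ν ∂μbar) ∧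
     (∀ ν' : Measure Y, IsProbabilityMeasure ν' →
      (∫ x, ∫ y, V (x, y) ∂ν ∂μbar) ≤ ∫ x, ∫ y, V (x, y) ∂ν' ∂μbar)) := by
  have hval : payoff V μ ν = vVariance V μ :=
    (forall_payoff_le_iff_payoff_eq_vVariance hV μ ν).1 hsaddle₂
  constructor
  · intro hmax
    have h₁ : vVariance V μ ≤ vVariance V μbar := hmax μ inferInstance
    have h₂ : vVariance V μbar ≤ payoff V μbar ν := vVariance_le_payoff hV μbar ν
    have h₃ : payoff V μbar ν ≤ payoff V μ ν := hsaddle₁ μbar inferInstance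
    refine ⟨fun μ' hμ' => (hsaddle₁ μ' hμ').trans
      (show payoff V μ ν ≤ payoff V μbar ν by linarith), ?_⟩
    exact (forall_payoff_le_iff_payoff_eq_vVariance hV μbar ν).2 (by linarith)
  · rintro ⟨hbest₁, hbest₂⟩ μ' _
    have hbar : payoff V μbar ν = vVariance V μbar :=
      (forall_payoff_le_iff_payoff_eq_vVariance hV μbar ν).1 hbest₂
    calc vVariance V μ' ≤ payoff V μ' ν := vVariance_le_payoff hV μ' ν
      _ ≤ payoff V μ ν := hsaddle₁ μ' inferInstance
      _ ≤ payoff V μbar ν := hbest₁ μ inferInstance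
      _ = vVariance V μbar := hbar

/-- Given a saddle point `(μ,ν)` of `𝒱`, a probability measure `μbar` maximizes the
`V`-variance iff `(μbar, ν)` is also a saddle point of `𝒱`. -/
theorem maximizer_iff_saddle {X Y : Type*}
    [MetricSpace X] [CompactSpace X] [MeasurableSpace X] [BorelSpace X] [Nonempty X]
    [MetricSpace Y] [CompactSpace Y] [MeasurableSpace Y] [BorelSpace Y] [Nonempty Y]
    (V : X × Y → ℝ) (hV : Continuous V)
    (μ : Measure X) (ν : Measure Y) [IsProbabilityMeasure μ] [IsProbabilityMeasure ν]
    (hsaddle₁ : ∀ μ' : Measure X, IsProbabilityMeasure μ' →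
      (∫ x, ∫ y, V (x, y) ∂ν ∂μ') ≤ ∫ x, ∫ y, V (x, y) ∂ν ∂μ)
    (hsaddle₂ : ∀ ν' : Measure Y, IsProbabilityMeasure ν' →
      (∫ x, ∫ y, V (x, y) ∂ν ∂μ) ≤ ∫ x, ∫ y, V (x, y) ∂ν' ∂μ)
    (μbar : Measure X) [IsProbabilityMeasure μbar] :
    (∀ μ' : Measure X, IsProbabilityMeasure μ' →
      (⨅ y : Y, ∫ x, V (x, y) ∂μ') ≤ ⨅ y : Y, ∫ x, V (x, y) ∂μbar) ↔
    ((∀ μ' : Measure X, IsProbabilityMeasure μ' →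
      (∫ x, ∫ y, V (x, y) ∂ν ∂μ') ≤ ∫ x, ∫ y, V (x, y) ∂ν ∂μbar) ∧
     (∀ ν' : Measure Y, IsProbabilityMeasure ν' →
      (∫ x, ∫ y, V (x, y) ∂ν ∂μbar) ≤ ∫ x, ∫ y, V (x, y) ∂ν' ∂μbar)) :=
  maximizer_iff_saddle_general V hV μ ν hsaddle₁ hsaddle₂ μbar
end

section
/- Under the hypotheses that X ⊆ M is compact, Y = conv(X) is compact, and every μ ∈ P(X) admits a barycenter, any variance-maximizing measure μ̄ ∈ P(X) satisfies W₂(δ_x, ν) = R for μ̄-almost every x, where ν is any circumcenter of i(X) in Wasserstein space and R is the circumradius of i(X). -/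
open MeasureTheory

/-- `W₂²(δ_x, ν) = ∫ d²(x,y) dν(y)`, as an extended nonnegative real. -/
noncomputable def w2sq {M : Type*} [MetricSpace M] [MeasurableSpace M]
    (x : M) (ν : Measure M) : ENNReal :=
  ∫⁻ y, ENNReal.ofReal (dist x y ^ 2) ∂ν

/-- The variance of `μ`: the infimum over `y ∈ M` of `∫ d²(x,y) dμ(x)`. -/
noncomputable def varE {M : Type*} [MetricSpace M] [MeasurableSpace M]
    (μ : Measure M) : ENNReal :=
  ⨅ y : M, ∫⁻ x, ENNReal.ofReal (dist x y ^ 2) ∂μ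

/-!
On `X` the circumcenter gives `W₂²(δ_x, ν) ≤ R²`, while by Tonelli
`∫ W₂²(δ_x, ν) dμ̄(x) = ∫∫ d²(x, y) dμ̄(x) dν(y) ≥ Var(μ̄)`. So it suffices to show `R² ≤ Var(μ̄)`:
then `W₂²(δ_·, ν)` is bounded by its mean `R²` μ̄-a.e., hence equal to it.

For `R² ≤ Var(μ̄)`, take finite `ε`-nets of `X` and of the set of barycenters, and play the matrix
game with payoff `d²(x_i, y_j)`. Against a mixed strategy `q` on the net of `X`, answer with a net
point near a barycenter of `∑ q_i δ_{x_i}`: its cost is at most `(Var(μ̄)^{1/2} + ε)²` by maximality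
of `μ̄`. The minimax theorem then yields a finitely supported `ν'` with
`W₂(δ_x, ν') ≤ Var(μ̄)^{1/2} + 2ε` for every `x ∈ X`.
-/

open Matrix Metric TopologicalSpace
open scoped ENNReal

theorem exists_mem_stdSimplex_forall_mulVec_le {ι κ : Type*} [Fintype ι] [Fintype κ]
    [Nonempty ι] (A : Matrix ι κ ℝ) {c : ℝ}
    (h : ∀ q ∈ stdSimplex ℝ ι, ∃ j, (q ᵥ* A) j ≤ c) :
    ∃ p ∈ stdSimplex ℝ κ, ∀ i, (A *ᵥ p) i ≤ c := by
  classical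
  have : Nonempty κ :=
    let ⟨j, _⟩ := h _ (single_mem_stdSimplex ℝ (Classical.arbitrary ι)); ⟨j⟩
  let B : (ι → ℝ) →ₗ[ℝ] (κ → ℝ) →ₗ[ℝ] ℝ := Matrix.toLinearMap₂' ℝ A
  obtain ⟨p, hp, q, hq, hsaddle⟩ := Sion.exists_isSaddlePointOn (f := fun p q => B q p)
    ⟨_, single_mem_stdSimplex ℝ (Classical.arbitrary κ)⟩ (convex_stdSimplex ℝ κ)
    (isCompact_stdSimplex ℝ κ)
    (fun q _ => (B q).continuous_of_finiteDimensional.lowerSemicontinuous.lowerSemicontinuousOn _)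
    (fun q _ => ((B q).convexOn (convex_stdSimplex ℝ κ)).quasiconvexOn)
    (convex_stdSimplex ℝ ι) ⟨_, single_mem_stdSimplex ℝ (Classical.arbitrary ι)⟩
    (isCompact_stdSimplex ℝ ι)
    (fun p _ =>
      (B.flip p).continuous_of_finiteDimensional.upperSemicontinuous.upperSemicontinuousOn _)
    (fun p _ => ((B.flip p).concaveOn (convex_stdSimplex ℝ ι)).quasiconcaveOn)
  obtain ⟨j, hj⟩ := h q hq
  refine ⟨p, hp, fun i => ?_⟩
  calc (A *ᵥ p) i = B (Pi.single i 1) p := by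
        simp only [B, toLinearMap₂'_apply', single_dotProduct, one_mul]
    _ ≤ B q (Pi.single j 1) := hsaddle _ (single_mem_stdSimplex ℝ j) _ (single_mem_stdSimplex ℝ i)
    _ = (q ᵥ* A) j := by
        simp only [B, toLinearMap₂'_apply', dotProduct_mulVec, dotProduct_single, mul_one]
    _ ≤ c := hj

theorem TotallyBounded.exists_finset_dist_lt {α : Type*} [PseudoMetricSpace α] {s : Set α}
    (hs : TotallyBounded s) {ε : ℝ} (hε : 0 < ε) :
    ∃ t : Finset α, ↑t ⊆ s ∧ ∀ x ∈ s, ∃ y ∈ t, dist x y < ε := by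
  obtain ⟨t, hts, htf, hst⟩ := finite_approx_of_totallyBounded hs ε hε
  refine ⟨htf.toFinset, by simpa using hts, fun x hx => ?_⟩
  obtain ⟨y, hy, hxy⟩ := Set.mem_iUnion₂.1 (hst hx)
  exact ⟨y, htf.mem_toFinset.2 hy, hxy⟩

/-- `dist` need not be measurable for the product σ-algebra when `M` is not separable, but
`⨅ k, d(x, k) + d(k, y)` over a countable dense subset of `S` is, and it equals `d(x, y)` on `S`. -/
theorem TopologicalSpace.IsSeparable.exists_measurable_eq_dist {M : Type*} [PseudoMetricSpace M]
    [MeasurableSpace M] [OpensMeasurableSpace M] {S : Set M} (hS : IsSeparable S) :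
    ∃ h : M × M → ℝ, Measurable h ∧ ∀ x ∈ S, ∀ y, h (x, y) = dist x y := by
  obtain ⟨c, hc, hSc⟩ := hS
  have := hc.to_subtype
  refine ⟨fun z => ⨅ k : c, (dist z.1 k + dist (k : M) z.2), ?_, fun x hx y => ?_⟩
  · exact Measurable.iInf fun k =>
      ((continuous_id.dist continuous_const).measurable.comp measurable_fst).add
        ((continuous_const.dist continuous_id).measurable.comp measurable_snd)
  have hx : x ∈ closure c := hSc hx
  have : Nonempty c := (closure_nonempty_iff.1 ⟨x, hx⟩).to_subtype
  refine le_antisymm (le_of_forall_pos_lt_add fun ε hε => ?_)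
    (le_ciInf fun k => dist_triangle x k y)
  obtain ⟨k, hk, hxk⟩ := Metric.mem_closure_iff.1 hx (ε / 2) (half_pos hε)
  calc ⨅ k : c, (dist x k + dist (k : M) y)
      ≤ dist x k + dist k y :=
        ciInf_le ⟨0, by rintro _ ⟨k, rfl⟩; positivity⟩ (⟨k, hk⟩ : c)
    _ ≤ dist x k + (dist k x + dist x y) := by gcongr; exact dist_triangle k x y
    _ < dist x y + ε := by rw [dist_comm k x]; linarith

section WeightedDiracs

variable {M : Type*} [MeasurableSpace M] {κ : Type*} [Fintype κ]

noncomputable def weightedDiracs (p : κ → ℝ) (y : κ → M) : Measure M :=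
  ∑ j, ENNReal.ofReal (p j) • Measure.dirac (y j)

theorem isProbabilityMeasure_weightedDiracs {p : κ → ℝ} (hp : p ∈ stdSimplex ℝ κ) (y : κ → M) :
    IsProbabilityMeasure (weightedDiracs p y) := by
  constructor
  simp only [weightedDiracs, Measure.coe_finsetSum, Finset.sum_apply, Measure.smul_apply,
    measure_univ, smul_eq_mul, mul_one]
  rw [← ENNReal.ofReal_sum_of_nonneg fun j _ => hp.1 j, hp.2, ENNReal.ofReal_one]

theorem weightedDiracs_compl_eq_zero [MeasurableSingletonClass M] (p : κ → ℝ) {y : κ → M}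
    {s : Set M} (hy : ∀ j, y j ∈ s) : weightedDiracs p y sᶜ = 0 := by
  simp [weightedDiracs, Measure.dirac_apply, hy]

theorem w2sq_weightedDiracs {M : Type*} [MetricSpace M] [MeasurableSpace M]
    [MeasurableSingletonClass M] {p : κ → ℝ} (hp : ∀ j, 0 ≤ p j) (y : κ → M) (x : M) :
    w2sq x (weightedDiracs p y) = ENNReal.ofReal (∑ j, p j * dist x (y j) ^ 2) := by
  rw [ENNReal.ofReal_sum_of_nonneg fun j _ => mul_nonneg (hp j) (sq_nonneg _)]
  simp [w2sq, weightedDiracs, lintegral_finsetSum_measure, ENNReal.ofReal_mul (hp _)]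

end WeightedDiracs

section Wasserstein

variable {M : Type*} [MetricSpace M] [MeasurableSpace M]

def IsBarycenter (μ : Measure M) (y : M) : Prop :=
  ∀ z : M, ∫ x, dist x y ^ 2 ∂μ ≤ ∫ x, dist x z ^ 2 ∂μ

def barycenters (X : Set M) : Set M :=
  {y | ∃ μ : Measure M, IsProbabilityMeasure μ ∧ μ Xᶜ = 0 ∧ IsBarycenter μ y}

noncomputable def circumradius (X : Set M) : ℝ≥0∞ :=
  ⨅ ν : {ν : Measure M // IsProbabilityMeasure ν}, ⨆ x ∈ X, w2sq x ν.1 ^ (1/2 : ℝ)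

theorem w2sq_rpow_half_eq_eLpNorm (x : M) (ν : Measure M) :
    w2sq x ν ^ (1/2 : ℝ) = eLpNorm (dist x ·) 2 ν := by
  rw [eLpNorm_eq_lintegral_rpow_enorm_toReal two_ne_zero ENNReal.ofNat_ne_top, w2sq]
  congr 1
  refine lintegral_congr fun y => ?_
  rw [Real.enorm_eq_ofReal dist_nonneg, ENNReal.toReal_ofNat, ENNReal.ofReal_rpow_of_nonneg
    dist_nonneg two_pos.le, Real.rpow_two]

theorem w2sq_rpow_half_le_edist_add [BorelSpace M] (x z : M) (ν : Measure M)
    [IsProbabilityMeasure ν] :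
    w2sq x ν ^ (1/2 : ℝ) ≤ edist x z + w2sq z ν ^ (1/2 : ℝ) := by
  simp only [w2sq_rpow_half_eq_eLpNorm]
  calc eLpNorm (dist x ·) 2 ν ≤ eLpNorm ((fun _ => dist x z) + (dist z ·)) 2 ν :=
        eLpNorm_mono_real fun y => by
          simpa [abs_of_nonneg dist_nonneg] using dist_triangle x z y
    _ ≤ eLpNorm (fun _ => dist x z) 2 ν + eLpNorm (dist z ·) 2 ν :=
        eLpNorm_add_le aestronglyMeasurable_const
          (continuous_const.dist continuous_id).aestronglyMeasurable one_le_two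
    _ = edist x z + eLpNorm (dist z ·) 2 ν := by
        rw [eLpNorm_const' _ two_ne_zero ENNReal.ofNat_ne_top, measure_univ, ENNReal.one_rpow,
          mul_one, Real.enorm_eq_ofReal dist_nonneg, edist_dist]

theorem ofReal_integral_dist_sq_eq_lintegral [BorelSpace M] {X : Set M} (hX : Bornology.IsBounded X)
    {μ : Measure M} [IsFiniteMeasure μ] (hμX : μ Xᶜ = 0) (y : M) :
    ENNReal.ofReal (∫ x, dist x y ^ 2 ∂μ) = ∫⁻ x, ENNReal.ofReal (dist x y ^ 2) ∂μ := by
  obtain ⟨r, hr⟩ := hX.subset_closedBall y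
  refine ofReal_integral_eq_lintegral_ofReal ?_ (ae_of_all _ fun x => by positivity)
  refine Integrable.of_bound
    ((continuous_id.dist continuous_const).pow 2).aestronglyMeasurable (r ^ 2) ?_
  filter_upwards [ae_iff.2 hμX] with x hx
  rw [Real.norm_of_nonneg (by positivity)]
  gcongr
  exact hr hx

theorem varE_ne_top [BorelSpace M] {X : Set M} (hX : Bornology.IsBounded X)
    {μ : Measure M} [IsFiniteMeasure μ] (hμX : μ Xᶜ = 0) (y : M) : varE μ ≠ ⊤ :=
  ne_top_of_le_ne_top
    (by rw [← ofReal_integral_dist_sq_eq_lintegral hX hμX y]; exact ENNReal.ofReal_ne_top)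
    (iInf_le _ y)

theorem IsBarycenter.w2sq_eq_varE [BorelSpace M] {X : Set M} (hX : Bornology.IsBounded X)
    {μ : Measure M} [IsFiniteMeasure μ] (hμX : μ Xᶜ = 0) {y : M} (hy : IsBarycenter μ y) :
    w2sq y μ = varE μ := by
  have hw : w2sq y μ = ∫⁻ x, ENNReal.ofReal (dist x y ^ 2) ∂μ := by simp only [w2sq, dist_comm]
  refine le_antisymm (le_iInf fun z => ?_) (hw ▸ iInf_le _ y)
  rw [hw, ← ofReal_integral_dist_sq_eq_lintegral hX hμX,
    ← ofReal_integral_dist_sq_eq_lintegral hX hμX]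
  exact ENNReal.ofReal_le_ofReal (hy z)

theorem varE_le_lintegral_w2sq [BorelSpace M] {X : Set M} (hX : IsSeparable X)
    {μ : Measure M} [SFinite μ] (hμX : μ Xᶜ = 0) (ν : Measure M) [IsProbabilityMeasure ν] :
    varE μ ≤ ∫⁻ x, w2sq x ν ∂μ := by
  obtain ⟨h, hh, hhX⟩ := hX.exists_measurable_eq_dist
  have hk : Measurable fun z : M × M => ENNReal.ofReal (h z ^ 2) :=
    ENNReal.measurable_ofReal.comp (hh.pow_const 2)
  have hae : ∀ᵐ x ∂μ, x ∈ X := ae_iff.2 hμX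
  calc varE μ = ∫⁻ _, varE μ ∂ν := by simp
    _ ≤ ∫⁻ y, ∫⁻ x, ENNReal.ofReal (h (x, y) ^ 2) ∂μ ∂ν :=
        lintegral_mono fun y => (iInf_le _ y).trans_eq <|
          lintegral_congr_ae <| hae.mono fun x hx => by simp only [hhX x hx]
    _ = ∫⁻ x, ∫⁻ y, ENNReal.ofReal (h (x, y) ^ 2) ∂ν ∂μ :=
        (lintegral_lintegral_swap (f := fun x y => ENNReal.ofReal (h (x, y) ^ 2))
          hk.aemeasurable).symm
    _ = ∫⁻ x, w2sq x ν ∂μ :=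
        lintegral_congr_ae <| hae.mono fun x hx => by simp only [w2sq, hhX x hx]

theorem circumradius_le_iSup (X : Set M) (ν : Measure M) [IsProbabilityMeasure ν] :
    circumradius X ≤ ⨆ x ∈ X, w2sq x ν ^ (1/2 : ℝ) :=
  iInf_le (fun ν : {ν : Measure M // IsProbabilityMeasure ν} => ⨆ x ∈ X, w2sq x ν.1 ^ (1/2 : ℝ))
    ⟨ν, ‹_›⟩

theorem circumradius_le_add_of_forall_dist_lt [BorelSpace M] {X : Set M} {t : Finset M} {ε : ℝ}
    (hXt : ∀ x ∈ X, ∃ i ∈ t, dist x i < ε) (ν : Measure M) [IsProbabilityMeasure ν]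
    {r : ℝ≥0∞} (hr : ∀ i ∈ t, w2sq i ν ^ (1/2 : ℝ) ≤ r) :
    circumradius X ≤ ENNReal.ofReal ε + r := by
  refine (circumradius_le_iSup X ν).trans (iSup₂_le fun x hx => ?_)
  obtain ⟨i, hi, hxi⟩ := hXt x hx
  calc w2sq x ν ^ (1/2 : ℝ) ≤ edist x i + w2sq i ν ^ (1/2 : ℝ) :=
        w2sq_rpow_half_le_edist_add x i ν
    _ ≤ ENNReal.ofReal ε + r := by
        gcongr
        · exact edist_dist x i ▸ ENNReal.ofReal_le_ofReal hxi.le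
        · exact hr i hi

end Wasserstein

section Circumradius

variable {M : Type*} [MetricSpace M] [MeasurableSpace M] [BorelSpace M] {X : Set M}

theorem exists_mem_finset_w2sq_rpow_half_le (hX : Bornology.IsBounded X) {t : Finset M} {ε : ℝ}
    (hBt : ∀ y ∈ barycenters X, ∃ j ∈ t, dist y j < ε)
    (hbary : ∀ μ : Measure M, IsProbabilityMeasure μ → μ Xᶜ = 0 → ∃ y, IsBarycenter μ y)
    {V : ℝ≥0∞} (hmax : ∀ μ : Measure M, IsProbabilityMeasure μ → μ Xᶜ = 0 → varE μ ≤ V)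
    (μ : Measure M) [IsProbabilityMeasure μ] (hμX : μ Xᶜ = 0) :
    ∃ j ∈ t, w2sq j μ ^ (1/2 : ℝ) ≤ ENNReal.ofReal ε + V ^ (1/2 : ℝ) := by
  obtain ⟨y, hy⟩ := hbary μ ‹_› hμX
  obtain ⟨j, hj, hyj⟩ := hBt y ⟨μ, ‹_›, hμX, hy⟩
  refine ⟨j, hj, ?_⟩
  calc w2sq j μ ^ (1/2 : ℝ) ≤ edist j y + w2sq y μ ^ (1/2 : ℝ) := w2sq_rpow_half_le_edist_add j y μ
    _ ≤ ENNReal.ofReal ε + V ^ (1/2 : ℝ) := by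
        rw [hy.w2sq_eq_varE hX hμX, edist_comm, edist_dist]
        gcongr
        exact hmax μ ‹_› hμX

theorem circumradius_le_rpow_half_add (hX : TotallyBounded X) (hXne : X.Nonempty)
    (hB : TotallyBounded (barycenters X))
    (hbary : ∀ μ : Measure M, IsProbabilityMeasure μ → μ Xᶜ = 0 → ∃ y, IsBarycenter μ y)
    {V : ℝ≥0∞} (hmax : ∀ μ : Measure M, IsProbabilityMeasure μ → μ Xᶜ = 0 → varE μ ≤ V)
    {ε : ℝ} (hε : 0 < ε) :
    circumradius X ≤ V ^ (1/2 : ℝ) + 2 * ENNReal.ofReal ε := by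
  classical
  rcases eq_or_ne V ⊤ with rfl | hV
  · simp
  obtain ⟨tX, htX, hXnet⟩ := hX.exists_finset_dist_lt hε
  obtain ⟨tB, -, hBnet⟩ := hB.exists_finset_dist_lt hε
  have : Nonempty tX :=
    let ⟨x, hx⟩ := hXne; let ⟨i, hi, _⟩ := hXnet x hx; ⟨⟨i, hi⟩⟩
  set r := ENNReal.ofReal ε + V ^ (1/2 : ℝ)
  have hr : r ^ (2 : ℝ) ≠ ⊤ := by finiteness
  let A : Matrix tX tB ℝ := Matrix.of fun i j => dist (i : M) j ^ 2
  have hgame : ∀ q ∈ stdSimplex ℝ tX, ∃ j, (q ᵥ* A) j ≤ (r ^ (2 : ℝ)).toReal := by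
    intro q hq
    have := isProbabilityMeasure_weightedDiracs hq ((↑) : tX → M)
    obtain ⟨j, hj, hjq⟩ := exists_mem_finset_w2sq_rpow_half_le hX.isBounded hBnet hbary hmax
      (weightedDiracs q (↑)) (weightedDiracs_compl_eq_zero q fun i => htX i.2)
    refine ⟨⟨j, hj⟩, ?_⟩
    change _ ≤ r at hjq
    rw [one_div, ENNReal.rpow_inv_le_iff two_pos, w2sq_weightedDiracs hq.1,
      ENNReal.ofReal_le_iff_le_toReal hr] at hjq
    simpa [A, vecMul, dotProduct, dist_comm] using hjq
  obtain ⟨p, hp, hpA⟩ := exists_mem_stdSimplex_forall_mulVec_le A hgame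
  have := isProbabilityMeasure_weightedDiracs hp ((↑) : tB → M)
  calc circumradius X ≤ ENNReal.ofReal ε + r := by
        refine circumradius_le_add_of_forall_dist_lt hXnet (weightedDiracs p (↑)) fun i hi => ?_
        rw [one_div, ENNReal.rpow_inv_le_iff two_pos, w2sq_weightedDiracs hp.1]
        refine ENNReal.ofReal_le_of_le_toReal ?_
        simpa [A, mulVec, dotProduct, mul_comm] using hpA ⟨i, hi⟩
    _ = V ^ (1/2 : ℝ) + 2 * ENNReal.ofReal ε := by ring

theorem circumradius_rpow_two_le (hX : TotallyBounded X) (hXne : X.Nonempty)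
    (hB : TotallyBounded (barycenters X))
    (hbary : ∀ μ : Measure M, IsProbabilityMeasure μ → μ Xᶜ = 0 → ∃ y, IsBarycenter μ y)
    {V : ℝ≥0∞} (hmax : ∀ μ : Measure M, IsProbabilityMeasure μ → μ Xᶜ = 0 → varE μ ≤ V) :
    circumradius X ^ (2 : ℝ) ≤ V := by
  rw [← ENNReal.le_rpow_inv_iff two_pos, ← one_div]
  refine ENNReal.le_of_forall_pos_le_add fun η hη _ => ?_
  calc circumradius X ≤ V ^ (1/2 : ℝ) + 2 * ENNReal.ofReal (η / 2) :=
        circumradius_le_rpow_half_add hX hXne hB hbary hmax (by positivity)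
    _ = V ^ (1/2 : ℝ) + η := by
        rw [← ENNReal.ofReal_ofNat, ← ENNReal.ofReal_mul zero_le_two, mul_div_cancel₀ _ two_ne_zero,
          ENNReal.ofReal_coe_nnreal]

end Circumradius

theorem varianceMaximizer_concentrates_on_sphere_general {M : Type*}
    [MetricSpace M] [MeasurableSpace M] [BorelSpace M]
    (X : Set M) (hX : IsCompact X) (hXne : X.Nonempty)
    (hconv : IsCompact {y : M | ∃ μ : Measure M, IsProbabilityMeasure μ ∧ μ Xᶜ = 0 ∧
      ∀ z : M, (∫ x, dist x y ^ 2 ∂μ) ≤ ∫ x, dist x z ^ 2 ∂μ})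
    (hbary : ∀ μ : Measure M, IsProbabilityMeasure μ → μ Xᶜ = 0 →
      ∃ y : M, ∀ z : M, (∫ x, dist x y ^ 2 ∂μ) ≤ ∫ x, dist x z ^ 2 ∂μ)
    -- `ν` is a circumcenter of `i(X)` in `(P(M), W₂)`:
    (ν : Measure M) (hν : IsProbabilityMeasure ν)
    (hcenter : (⨆ x ∈ X, w2sq x ν ^ (1/2 : ℝ)) =
      ⨅ ν' : {ν' : Measure M // IsProbabilityMeasure ν'}, ⨆ x ∈ X, w2sq x ν'.1 ^ (1/2 : ℝ))
    -- `μbar` is variance maximizing over `P(X)`: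
    (μbar : Measure M) (hμbar : IsProbabilityMeasure μbar) (hμbarX : μbar Xᶜ = 0)
    (hmax : ∀ μ' : Measure M, IsProbabilityMeasure μ' → μ' Xᶜ = 0 → varE μ' ≤ varE μbar) :
    ∀ᵐ x ∂μbar, w2sq x ν ^ (1/2 : ℝ) =
      ⨅ ν' : {ν' : Measure M // IsProbabilityMeasure ν'}, ⨆ x ∈ X, w2sq x ν'.1 ^ (1/2 : ℝ) := by
  change ∀ᵐ x ∂μbar, w2sq x ν ^ (1/2 : ℝ) = circumradius X
  change _ = circumradius X at hcenter
  obtain ⟨x₀, hx₀⟩ := hXne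
  have hRV : circumradius X ^ (2 : ℝ) ≤ varE μbar :=
    circumradius_rpow_two_le hX.totallyBounded ⟨x₀, hx₀⟩ hconv.totallyBounded hbary hmax
  have hRtop : circumradius X ^ (2 : ℝ) ≠ ⊤ :=
    ne_top_of_le_ne_top (varE_ne_top hX.isBounded hμbarX x₀) hRV
  have hball : ∀ᵐ x ∂μbar, w2sq x ν ≤ circumradius X ^ (2 : ℝ) :=
    (ae_iff.2 hμbarX).mono fun x hx => by
      rw [← ENNReal.rpow_inv_le_iff two_pos, ← one_div, ← hcenter]
      exact le_iSup₂ (f := fun x _ => w2sq x ν ^ (1/2 : ℝ)) x hx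
  have hmean : circumradius X ^ (2 : ℝ) ≤ ∫⁻ x, w2sq x ν ∂μbar :=
    hRV.trans (varE_le_lintegral_w2sq hX.isSeparable hμbarX ν)
  have hfinite : ∫⁻ x, w2sq x ν ∂μbar ≠ ⊤ :=
    ne_top_of_le_ne_top (by simpa using hRtop) (lintegral_mono_ae hball)
  filter_upwards [ae_eq_of_ae_le_of_lintegral_le hball hfinite aemeasurable_const
    (by simpa using hmean)] with x hx
  rw [hx, one_div, ENNReal.rpow_rpow_inv two_ne_zero]

/-- Any variance-maximizing `μbar ∈ P(X)` concentrates on the sphere `W₂(δ_x, ν) = R`,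
where `ν` is any circumcenter of `i(X)` in Wasserstein space and `R` its circumradius. -/
theorem varianceMaximizer_concentrates_on_sphere {M : Type*}
    [MetricSpace M] [CompleteSpace M] [MeasurableSpace M] [BorelSpace M]
    (X : Set M) (hX : IsCompact X) (hXne : X.Nonempty)
    (hconv : IsCompact {y : M | ∃ μ : Measure M, IsProbabilityMeasure μ ∧ μ Xᶜ = 0 ∧
      ∀ z : M, (∫ x, dist x y ^ 2 ∂μ) ≤ ∫ x, dist x z ^ 2 ∂μ})
    (hbary : ∀ μ : Measure M, IsProbabilityMeasure μ → μ Xᶜ = 0 →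
      ∃ y : M, ∀ z : M, (∫ x, dist x y ^ 2 ∂μ) ≤ ∫ x, dist x z ^ 2 ∂μ)
    -- `ν` is a circumcenter of `i(X)` in `(P(M), W₂)`:
    (ν : Measure M) (hν : IsProbabilityMeasure ν)
    (hcenter : (⨆ x ∈ X, w2sq x ν ^ (1/2 : ℝ)) =
      ⨅ ν' : {ν' : Measure M // IsProbabilityMeasure ν'}, ⨆ x ∈ X, w2sq x ν'.1 ^ (1/2 : ℝ))
    -- `μbar` is variance maximizing over `P(X)`:
    (μbar : Measure M) (hμbar : IsProbabilityMeasure μbar) (hμbarX : μbar Xᶜ = 0)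
    (hmax : ∀ μ' : Measure M, IsProbabilityMeasure μ' → μ' Xᶜ = 0 → varE μ' ≤ varE μbar) :
    ∀ᵐ x ∂μbar, w2sq x ν ^ (1/2 : ℝ) =
      ⨅ ν' : {ν' : Measure M // IsProbabilityMeasure ν'}, ⨆ x ∈ X, w2sq x ν'.1 ^ (1/2 : ℝ) :=
  varianceMaximizer_concentrates_on_sphere_general X hX hXne hconv hbary ν hν hcenter μbar hμbar
    hμbarX hmax
end

section
/- Let V : X × Y → ℝ be continuous on compact metric spaces. Then max_{μ∈P(X)} min_{y∈Y} ∫_X V(x,y)dμ(x) = min_{ν∈P(Y)} max_{x∈X} ∫_Y V(x,y)dν(y). -/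
/-!
Weak duality is Fubini: `min_y ∫ V(·, y) dμ ≤ ∫∫ V d(μ ⊗ ν) ≤ max_x ∫ V(x, ·) dν`.

For the converse, `x ↦ V(x, ·)` is continuous into `C(Y, ℝ)`, so compactness gives finite sets
`s ⊆ X`, `t ⊆ Y` with every `V(x, ·)` uniformly `ε/2`-close to some `V(i, ·)`, `i ∈ s`, and every
`V(·, y)` to some `V(·, j)`, `j ∈ t`. Von Neumann's theorem (Sion's theorem on two simplices)
gives optimal mixed strategies `p`, `q` of the matrix game `(V(i, j))`; the atomic measures with
weights `p` on `s` and `q` on `t` are then an `ε`-saddle point of the continuous game.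
-/
open MeasureTheory Matrix Set

theorem Matrix.exists_mulVec_le_vecMul {m n : Type*} [Fintype m] [Fintype n]
    [Nonempty m] [Nonempty n] (A : Matrix m n ℝ) :
    ∃ p ∈ stdSimplex ℝ m, ∃ q ∈ stdSimplex ℝ n, ∀ i j, (A *ᵥ q) i ≤ (p ᵥ* A) j := by
  classical
  -- Sion's theorem minimizes over its first variable, which is why `q` comes first.
  obtain ⟨q, hq, p, hp, hsaddle⟩ :=
    Sion.exists_isSaddlePointOn (f := fun q p => p ⬝ᵥ A *ᵥ q)
      ⟨_, single_mem_stdSimplex ℝ (Classical.arbitrary n)⟩ (convex_stdSimplex ℝ n)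
      (isCompact_stdSimplex ℝ n)
      (fun p _ => (by fun_prop : Continuous fun q => p ⬝ᵥ A *ᵥ q)
        |>.lowerSemicontinuous.lowerSemicontinuousOn _)
      (fun p _ => by
        simp_rw [dotProduct_mulVec]
        exact ((dotProductBilin ℝ ℝ (p ᵥ* A)).convexOn (convex_stdSimplex ℝ n)).quasiconvexOn)
      (convex_stdSimplex ℝ m)
      ⟨_, single_mem_stdSimplex ℝ (Classical.arbitrary m)⟩ (isCompact_stdSimplex ℝ m)
      (fun q _ => (by fun_prop : Continuous fun p => p ⬝ᵥ A *ᵥ q)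
        |>.upperSemicontinuous.upperSemicontinuousOn _)
      (fun q _ => ((dotProductBilin ℝ ℝ).flip (A *ᵥ q)
        |>.concaveOn (convex_stdSimplex ℝ m)).quasiconcaveOn)
  refine ⟨p, hp, q, hq, fun i j => ?_⟩
  have h := hsaddle _ (single_mem_stdSimplex ℝ j) _ (single_mem_stdSimplex ℝ i)
  simp only [single_dotProduct, one_mul, mulVec_single_one] at h
  exact h

theorem dotProduct_le_dotProduct_add_of_mem_stdSimplex {ι : Type*} [Fintype ι] {p a b : ι → ℝ}
    (hp : p ∈ stdSimplex ℝ ι) {ε : ℝ} (h : ∀ i, a i ≤ b i + ε) : p ⬝ᵥ a ≤ p ⬝ᵥ b + ε := by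
  calc p ⬝ᵥ a ≤ p ⬝ᵥ (b + fun _ => ε) :=
        dotProduct_le_dotProduct_of_nonneg_left h hp.1
    _ = p ⬝ᵥ b + ε := by
        simp [dotProduct, mul_add, Finset.sum_add_distrib, ← Finset.sum_mul, hp.2]

section WeightedDirac

variable {α ι : Type*} [MeasurableSpace α] [Fintype ι]

noncomputable def weightedDirac (t : ι → α) (p : ι → ℝ) : Measure α :=
  ∑ i, ENNReal.ofReal (p i) • Measure.dirac (t i)

theorem isProbabilityMeasure_weightedDirac (t : ι → α) {p : ι → ℝ} (hp : p ∈ stdSimplex ℝ ι) :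
    IsProbabilityMeasure (weightedDirac t p) := by
  constructor
  simp only [weightedDirac, Measure.coe_finsetSum, Measure.coe_smul, Finset.sum_apply,
    Pi.smul_apply, measure_univ, smul_eq_mul, mul_one]
  rw [← ENNReal.ofReal_sum_of_nonneg fun i _ => hp.1 i, hp.2, ENNReal.ofReal_one]

theorem integral_weightedDirac [MeasurableSingletonClass α] {E : Type*} [NormedAddCommGroup E]
    [NormedSpace ℝ E] [CompleteSpace E] (t : ι → α) {p : ι → ℝ} (hp : 0 ≤ p) (f : α → E) :
    ∫ a, f a ∂weightedDirac t p = ∑ i, p i • f (t i) := by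
  rw [weightedDirac, integral_finsetSum_measure fun i _ =>
    (integrable_dirac enorm_lt_top).smul_measure ENNReal.ofReal_ne_top]
  simp [integral_smul_measure, ENNReal.toReal_ofReal (hp _)]

end WeightedDirac

theorem CompactSpace.exists_finset_dist_lt {X M : Type*} [TopologicalSpace X] [CompactSpace X]
    [PseudoMetricSpace M] {F : X → M} (hF : Continuous F) {ε : ℝ} (hε : 0 < ε) :
    ∃ s : Finset X, ∀ x, ∃ i ∈ s, dist (F x) (F i) < ε := by
  obtain ⟨s, -, hs⟩ := isCompact_univ.elim_nhds_subcover (fun i => F ⁻¹' Metric.ball (F i) ε)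
    fun i _ => hF.continuousAt.preimage_mem_nhds (Metric.ball_mem_nhds _ hε)
  exact ⟨s, fun x => by simpa using hs (mem_univ x)⟩

theorem Continuous.exists_finset_forall_dist_lt {X Y : Type*} [TopologicalSpace X]
    [CompactSpace X] [TopologicalSpace Y] [CompactSpace Y] {V : X × Y → ℝ} (hV : Continuous V)
    {ε : ℝ} (hε : 0 < ε) : ∃ s : Finset X, ∀ x, ∃ i ∈ s, ∀ y, dist (V (x, y)) (V (i, y)) < ε := by
  obtain ⟨s, hs⟩ := CompactSpace.exists_finset_dist_lt (ContinuousMap.curry ⟨V, hV⟩).continuous hε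
  refine ⟨s, fun x => ?_⟩
  obtain ⟨i, hi, hxi⟩ := hs x
  exact ⟨i, hi, fun y => (ContinuousMap.dist_apply_le_dist y).trans_lt hxi⟩

section Integral

variable {α : Type*} [TopologicalSpace α] [CompactSpace α] [MeasurableSpace α]
  [OpensMeasurableSpace α] {μ : Measure α} [IsProbabilityMeasure μ] {g : α → ℝ}

theorem Continuous.ciInf_le_integral (hg : Continuous g) : ⨅ a, g a ≤ ∫ a, g a ∂μ := by
  simpa using integral_mono (integrable_const (μ := μ) _)
    (hg.integrable_of_hasCompactSupport (.of_compactSpace g))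
    (ciInf_le (isCompact_range hg).bddBelow)

theorem Continuous.integral_le_ciSup (hg : Continuous g) : ∫ a, g a ∂μ ≤ ⨆ a, g a := by
  simpa using integral_mono (hg.integrable_of_hasCompactSupport (.of_compactSpace g))
    (integrable_const (μ := μ) _) (le_ciSup (isCompact_range hg).bddAbove)

end Integral

theorem ciSup_eq_ciInf_of_forall_le_of_forall_exists_le_add {M N : Type*} [Nonempty M]
    [Nonempty N] {φ : M → ℝ} {ψ : N → ℝ} (hle : ∀ m n, φ m ≤ ψ n)
    (happrox : ∀ ε > 0, ∃ m n, ψ n ≤ φ m + ε) : ⨆ m, φ m = ⨅ n, ψ n := by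
  have hφ : BddAbove (range φ) := ⟨ψ (Classical.arbitrary N), forall_mem_range.2 (hle · _)⟩
  have hψ : BddBelow (range ψ) := ⟨φ (Classical.arbitrary M), forall_mem_range.2 (hle _ ·)⟩
  refine le_antisymm (ciSup_le fun m => le_ciInf (hle m)) (le_of_forall_pos_le_add fun ε hε => ?_)
  obtain ⟨m, n, h⟩ := happrox ε hε
  calc ⨅ n, ψ n ≤ ψ n := ciInf_le hψ n
    _ ≤ φ m + ε := h
    _ ≤ (⨆ m, φ m) + ε := by grw [le_ciSup hφ m]

theorem iInf_integral_le_iSup_integral {X Y : Type*} [MetricSpace X] [CompactSpace X]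
    [MeasurableSpace X] [OpensMeasurableSpace X] [MetricSpace Y] [CompactSpace Y]
    [MeasurableSpace Y] [OpensMeasurableSpace Y] {V : X × Y → ℝ} (hV : Continuous V)
    (μ : Measure X) (ν : Measure Y) [IsProbabilityMeasure μ] [IsProbabilityMeasure ν] :
    ⨅ y, ∫ x, V (x, y) ∂μ ≤ ⨆ x, ∫ y, V (x, y) ∂ν := by
  have hleft : Continuous fun y => ∫ x, V (x, y) ∂μ := by
    simpa using continuous_parametric_integral_of_continuous (μ := μ) (f := fun y x => V (x, y))
      (hV.comp continuous_swap) isCompact_univ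
  have hright : Continuous fun x => ∫ y, V (x, y) ∂ν := by
    simpa using continuous_parametric_integral_of_continuous (μ := ν) (f := fun x y => V (x, y))
      hV isCompact_univ
  calc ⨅ y, ∫ x, V (x, y) ∂μ ≤ ∫ y, ∫ x, V (x, y) ∂μ ∂ν := hleft.ciInf_le_integral
    _ = ∫ x, ∫ y, V (x, y) ∂ν ∂μ :=
        (integral_integral_swap (f := fun x y => V (x, y))
          (hV.integrable_of_hasCompactSupport (.of_compactSpace V))).symm
    _ ≤ ⨆ x, ∫ y, V (x, y) ∂ν := hright.integral_le_ciSup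

theorem exists_integral_le_integral_add {X Y : Type*} [TopologicalSpace X] [CompactSpace X]
    [Nonempty X] [MeasurableSpace X] [MeasurableSingletonClass X] [TopologicalSpace Y]
    [CompactSpace Y] [Nonempty Y] [MeasurableSpace Y] [MeasurableSingletonClass Y]
    {V : X × Y → ℝ} (hV : Continuous V) {ε : ℝ} (hε : 0 < ε) :
    ∃ (μ : Measure X) (ν : Measure Y), IsProbabilityMeasure μ ∧ IsProbabilityMeasure ν ∧
      ∀ x y, ∫ y', V (x, y') ∂ν ≤ ∫ x', V (x', y) ∂μ + ε := by
  obtain ⟨s, hs⟩ := hV.exists_finset_forall_dist_lt (half_pos hε)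
  obtain ⟨t, ht⟩ := (hV.comp continuous_swap).exists_finset_forall_dist_lt (half_pos hε)
  simp only [Function.comp_apply, Prod.swap_prod_mk] at ht
  have : Nonempty s := let ⟨i, hi, _⟩ := hs (Classical.arbitrary X); ⟨⟨i, hi⟩⟩
  have : Nonempty t := let ⟨j, hj, _⟩ := ht (Classical.arbitrary Y); ⟨⟨j, hj⟩⟩
  obtain ⟨p, hp, q, hq, hpq⟩ :=
    Matrix.exists_mulVec_le_vecMul (of fun (i : s) (j : t) => V (i, j))
  refine ⟨weightedDirac (↑) p, weightedDirac (↑) q, isProbabilityMeasure_weightedDirac _ hp,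
    isProbabilityMeasure_weightedDirac _ hq, fun x y => ?_⟩
  obtain ⟨i, hi, hxi⟩ := hs x
  obtain ⟨j, hj, hyj⟩ := ht y
  rw [integral_weightedDirac _ hq.1, integral_weightedDirac _ hp.1]
  calc ∑ j, q j • V (x, j) = q ⬝ᵥ fun j => V (x, j) := rfl
    _ ≤ q ⬝ᵥ (fun j => V (i, j)) + ε / 2 :=
        dotProduct_le_dotProduct_add_of_mem_stdSimplex hq fun j => by
          linarith [(abs_sub_lt_iff.mp (hxi j)).1]
    _ ≤ p ⬝ᵥ (fun i => V (i, j)) + ε / 2 := by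
        grw [dotProduct_comm]; exact add_le_add_left (hpq ⟨i, hi⟩ ⟨j, hj⟩) _
    _ ≤ p ⬝ᵥ (fun i => V (i, y)) + ε / 2 + ε / 2 := by
        gcongr
        exact dotProduct_le_dotProduct_add_of_mem_stdSimplex hp fun i => by
          linarith [(abs_sub_lt_iff.mp (hyj i)).2]
    _ = ∑ i, p i • V (i, y) + ε := by rw [add_assoc, add_halves]; rfl

/-- Minimax equality: the maximal `V`-variance over `P(X)` equals the minimal
`V`-anti-variance over `P(Y)`. -/
theorem maxVarV_eq_minAntivarV {X Y : Type*}
    [MetricSpace X] [CompactSpace X] [MeasurableSpace X] [BorelSpace X] [Nonempty X]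
    [MetricSpace Y] [CompactSpace Y] [MeasurableSpace Y] [BorelSpace Y] [Nonempty Y]
    (V : X × Y → ℝ) (hV : Continuous V) :
    (⨆ μ : {μ : Measure X // IsProbabilityMeasure μ}, ⨅ y : Y, ∫ x, V (x, y) ∂μ.1) =
      ⨅ ν : {ν : Measure Y // IsProbabilityMeasure ν}, ⨆ x : X, ∫ y, V (x, y) ∂ν.1 := by
  have : Nonempty {μ : Measure X // IsProbabilityMeasure μ} :=
    ⟨⟨Measure.dirac (Classical.arbitrary X), inferInstance⟩⟩
  have : Nonempty {ν : Measure Y // IsProbabilityMeasure ν} :=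
    ⟨⟨Measure.dirac (Classical.arbitrary Y), inferInstance⟩⟩
  refine ciSup_eq_ciInf_of_forall_le_of_forall_exists_le_add
    (fun ⟨μ, _⟩ ⟨ν, _⟩ => iInf_integral_le_iSup_integral hV μ ν) fun ε hε => ?_
  obtain ⟨μ, ν, hμ, hν, h⟩ := exists_integral_le_integral_add hV hε
  exact ⟨⟨μ, hμ⟩, ⟨ν, hν⟩, ciSup_le fun x => sub_le_iff_le_add.1 <|
    le_ciInf fun y => sub_le_iff_le_add.2 (h x y)⟩
end
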